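/- Assume 0 < τ < 1. If (E, φ) is a τ-semistable framed coherent sheaf on X, then E is torsion-free, and hence (X being a smooth curve) E is locally free, so (E, φ) is a framed bundle. -/

import Mathlib

open AlgebraicGeometry CategoryTheory CategoryTheory.Limits

noncomputable section

/-!
We formalize the setting of the paper "Rationality and Brauer group of a moduli space
of framed bundles" by Biswas, Gómez and Muñoz.  Throughout, `X` is a fixed compact
connected Riemann surface (smooth projective complex curve) of genus `g ≥ 2`, with a
fixed point `x₀ ∈ X`, a fixed rank `r > 0` and a fixed holomorphic line bundle `L` on
`X`.  The theory of coherent sheaves on `X` (which is not available in Mathlib) is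
axiomatized by the structure `CurveData` below: it records the type of coherent sheaves
on `X` together with their ranks, degrees, fibers at `x₀`, (proper nonzero) subsheaves,
and the basic numerical facts relating these notions on a smooth projective curve.
-/

/-- The theory of coherent sheaves on a fixed compact connected Riemann surface `X` of
genus `g ≥ 2` with a fixed marked point `x₀ ∈ X` and a fixed line bundle `L`, for a
fixed rank `r > 0`. -/
structure CurveData (r : ℕ) : Type 1 where
  /-- the rank `r` is positive -/
  r_pos : 0 < r
  /-- the genus of `X` -/
  g : ℕ
  /-- the genus is at least `2` -/
  two_le_g : 2 ≤ g
  /-- coherent sheaves on `X` -/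
  Coh : Type
  /-- `E` is locally free, i.e. a vector bundle -/
  locallyFree : Coh → Prop
  /-- `E` is torsion-free -/
  torsionFree : Coh → Prop
  /-- the determinant line bundle `det E` is isomorphic to the fixed line bundle `L` -/
  detL : Coh → Prop
  /-- the rank of a coherent sheaf -/
  rk : Coh → ℕ
  /-- the degree of a coherent sheaf -/
  deg : Coh → ℤ
  /-- the fiber `E_{x₀}` at the marked point, a complex vector space -/
  Fib : Coh → ModuleCat.{0} ℂ
  /-- proper nonzero subsheaves `E' ⊂ E` -/
  Sub : Coh → Type
  /-- the coherent sheaf underlying a subsheaf `E' ⊂ E` -/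
  sub : ∀ {E : Coh}, Sub E → Coh
  /-- the map `E'_{x₀} → E_{x₀}` induced on fibers at `x₀` by a subsheaf `E' ⊂ E` -/
  fibMap : ∀ {E : Coh} (E' : Sub E), ↥(Fib (sub E')) →ₗ[ℂ] ↥(Fib E)
  /-- a subsheaf has smaller rank -/
  rk_sub_le : ∀ {E : Coh} (E' : Sub E), rk (sub E') ≤ rk E
  /-- on a smooth curve, a torsion-free coherent sheaf is locally free -/
  locallyFree_of_torsionFree : ∀ E : Coh, torsionFree E → locallyFree E
  /-- a coherent sheaf is torsion-free iff all its nonzero subsheaves have positive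
  rank (i.e. iff it has no torsion subsheaf) -/
  torsionFree_iff : ∀ E : Coh, torsionFree E ↔ ∀ E' : Sub E, 0 < rk (sub E')
  /-- a nonzero torsion sheaf on a curve has positive degree -/
  deg_pos_of_rk_eq_zero : ∀ {E : Coh} (E' : Sub E), rk (sub E') = 0 → 0 < deg (sub E')
  /-- the fiber of a vector bundle at `x₀` has dimension equal to the rank -/
  finrank_fib : ∀ E : Coh, locallyFree E → Module.finrank ℂ ↥(Fib E) = rk E

namespace CurveData

variable {r : ℕ}

/-- `ε(E', φ) = 1` if `φ` restricted to `E'_{x₀}` is nonzero, and `ε(E', φ) = 0`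
otherwise. -/
def eps (D : CurveData r) {E : D.Coh} (φ : ↥(D.Fib E) →ₗ[ℂ] (Fin r → ℂ))
    (E' : D.Sub E) : ℝ := by
  classical exact if φ.comp (D.fibMap E') = 0 then 0 else 1

/-- A framed coherent sheaf `(E, φ)` is `τ`-stable if for every proper (nonzero)
subsheaf `E' ⊂ E` one has
`deg E' − ε(E', φ)·τ < rk E' · (deg E − τ) / rk E`. -/
def TauStable (D : CurveData r) (τ : ℝ) {E : D.Coh}
    (φ : ↥(D.Fib E) →ₗ[ℂ] (Fin r → ℂ)) : Prop :=
  ∀ E' : D.Sub E,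
    (D.deg (D.sub E') : ℝ) - D.eps φ E' * τ <
      (D.rk (D.sub E') : ℝ) * (((D.deg E : ℝ) - τ) / (D.rk E : ℝ))

/-- A framed coherent sheaf `(E, φ)` is `τ`-semistable if for every proper (nonzero)
subsheaf `E' ⊂ E` one has
`deg E' − ε(E', φ)·τ ≤ rk E' · (deg E − τ) / rk E`. -/
def TauSemistable (D : CurveData r) (τ : ℝ) {E : D.Coh}
    (φ : ↥(D.Fib E) →ₗ[ℂ] (Fin r → ℂ)) : Prop :=
  ∀ E' : D.Sub E,
    (D.deg (D.sub E') : ℝ) - D.eps φ E' * τ ≤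
      (D.rk (D.sub E') : ℝ) * (((D.deg E : ℝ) - τ) / (D.rk E : ℝ))

/-- A vector bundle `E` on `X` is stable if `μ(E') < μ(E)` for every proper nonzero
subsheaf `E' ⊂ E`, where `μ = deg / rk` is the slope. -/
def StableBundle (D : CurveData r) (E : D.Coh) : Prop :=
  D.locallyFree E ∧ ∀ E' : D.Sub E,
    (D.deg (D.sub E') : ℝ) / (D.rk (D.sub E') : ℝ) < (D.deg E : ℝ) / (D.rk E : ℝ)

/-- A vector bundle `E` on `X` is semistable if `μ(E') ≤ μ(E)` for every proper
nonzero subsheaf `E' ⊂ E`, where `μ = deg / rk` is the slope. -/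
def SemistableBundle (D : CurveData r) (E : D.Coh) : Prop :=
  D.locallyFree E ∧ ∀ E' : D.Sub E,
    (D.deg (D.sub E') : ℝ) / (D.rk (D.sub E') : ℝ) ≤ (D.deg E : ℝ) / (D.rk E : ℝ)

end CurveData

/-- A framed coherent sheaf on `X`: a pair `(E, φ)` where `E` is a coherent sheaf of
rank `r` on `X` and `φ : E_{x₀} → ℂ^r` is a nonzero `ℂ`-linear homomorphism. -/
structure FramedSheaf {r : ℕ} (D : CurveData r) where
  /-- the underlying coherent sheaf -/
  E : D.Coh
  /-- `E` has rank `r` -/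
  rk_eq : D.rk E = r
  /-- the framing `φ : E_{x₀} → ℂ^r` -/
  φ : ↥(D.Fib E) →ₗ[ℂ] (Fin r → ℂ)
  /-- the framing is nonzero -/
  φ_ne : φ ≠ 0

namespace CurveData

variable {r : ℕ} {D : CurveData r} {E : D.Coh} {φ : ↥(D.Fib E) →ₗ[ℂ] (Fin r → ℂ)}

theorem eps_mul_lt_one (φ : ↥(D.Fib E) →ₗ[ℂ] (Fin r → ℂ)) (E' : D.Sub E) {τ : ℝ} (hτ : τ < 1) :
    D.eps φ E' * τ < 1 := by
  unfold eps
  split_ifs <;> linarith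

theorem TauSemistable.deg_le_eps_mul_of_rk_eq_zero {τ : ℝ} (hss : D.TauSemistable τ φ)
    {E' : D.Sub E} (hE' : D.rk (D.sub E') = 0) : (D.deg (D.sub E') : ℝ) ≤ D.eps φ E' * τ := by
  have h := hss E'
  rw [hE', Nat.cast_zero, zero_mul] at h
  linarith

/-- A torsion subsheaf has integral degree `≥ 1`, while semistability bounds it by `ε τ < 1`. -/
theorem TauSemistable.torsionFree {τ : ℝ} (hτ : τ < 1) (hss : D.TauSemistable τ φ) :
    D.torsionFree E := by
  refine (D.torsionFree_iff E).2 fun E' => Nat.pos_of_ne_zero fun hE' => ?_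
  have hdeg : (1 : ℝ) ≤ D.deg (D.sub E') := by exact_mod_cast D.deg_pos_of_rk_eq_zero E' hE'
  linarith [hss.deg_le_eps_mul_of_rk_eq_zero hE', eps_mul_lt_one φ E' hτ]

end CurveData

theorem torsionFree_and_locallyFree_of_tauSemistable_general {r : ℕ} (D : CurveData r)
    {τ : ℝ} (hτ1 : τ < 1) (F : FramedSheaf D)
    (hss : D.TauSemistable τ F.φ) :
    D.torsionFree F.E ∧ D.locallyFree F.E :=
  have htf := hss.torsionFree hτ1
  ⟨htf, D.locallyFree_of_torsionFree _ htf⟩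

/-- If `0 < τ < 1` and `(E, φ)` is a `τ`-semistable framed coherent sheaf on `X`, then
`E` is torsion-free; hence (`X` being a smooth curve) `E` is locally free, so
`(E, φ)` is a framed bundle. -/
theorem torsionFree_and_locallyFree_of_tauSemistable {r : ℕ} (D : CurveData r)
    {τ : ℝ} (hτ0 : 0 < τ) (hτ1 : τ < 1) (F : FramedSheaf D)
    (hss : D.TauSemistable τ F.φ) :
    D.torsionFree F.E ∧ D.locallyFree F.E :=
  torsionFree_and_locallyFree_of_tauSemistable_general D hτ1 F hss
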